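/- For 0 < α ≤ π/4, the quantum Lovász number of the channel N_α satisfies ϑ̃(N_α) = 2 + cos²α + sec²α > 4: the primal solution (ρ, T) with ρ = (cos²α|0⟩⟨0| + |1⟩⟨1|)/(1+cos²α) and T = T₁⊗T₂ + |00⟩⟨11| + |11⟩⟨00| gives lower bound 2 + cos²α + sec²α, and the dual solution Y gives matching upper bound ‖tr_A Y‖_∞ = 2 + cos²α + sec²α. -/

import Mathlib

open Matrix Kronecker Complex ComplexOrder

noncomputable section

abbrev M3 : Type := Matrix (Fin 3) (Fin 3) ℂ
abbrev M9 : Type := Matrix (Fin 3 × Fin 3) (Fin 3 × Fin 3) ℂ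

/-- |i⟩⟨j| on ℂ³ -/
def ket (i j : Fin 3) : M3 := Matrix.single i j 1

def E (α : ℝ) : M3 := (Real.sin α : ℂ) • ket 0 1 + ket 1 2
def D (α : ℝ) : M3 := (Real.cos α : ℂ) • ket 2 1 + ket 1 0

def u (α : ℝ) : Fin 3 × Fin 3 → ℂ := fun p =>
  (((if p = (1,0) then Real.sin α else 0) + (if p = (2,1) then 1 else 0)) /
    Real.sqrt (1 + Real.sin α ^ 2) : ℝ)

def v (α : ℝ) : Fin 3 × Fin 3 → ℂ := fun p =>
  (((if p = (1,2) then Real.cos α else 0) + (if p = (0,1) then 1 else 0)) /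
    Real.sqrt (1 + Real.cos α ^ 2) : ℝ)

/-- Projection onto span{|u_α⟩, |v_α⟩}, the support of the Choi matrix of N_α. -/
def Pproj (α : ℝ) : M9 :=
  vecMulVec (u α) (star (u α)) + vecMulVec (v α) (star (v α))

/-- Partial trace over the first (A) factor. -/
def trA (M : M9) : M3 := fun i j => ∑ k, M (k, i) (k, j)

/-- Partial trace over the second (B) factor. -/
def trB (M : M9) : M3 := fun i j => ∑ k, M (i, k) (j, k)

def Phi : Fin 3 × Fin 3 → ℂ := fun p => if p.1 = p.2 then 1 else 0

def F1 (α : ℝ) : M3 := ket 0 0 + (Real.cos α ^ 2 : ℂ) • ket 1 1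
def F2 (α : ℝ) : M3 := (Real.sin α ^ 2 : ℂ) • ket 1 1 + ket 2 2
def F3 : M3 := ket 0 2
def F4 : M3 := ket 2 0

/-- The non-commutative graph S_α of N_α. -/
def Sgraph (α : ℝ) : Submodule ℂ M3 := Submodule.span ℂ ({F1 α, F2 α, F3, F4} : Set M3)

/-! Write `c = cos² α` (so `sec² α = 1/c`, `tan² α = (1 - c)/c`, and `1/2 ≤ c < 1`); the
non-commutative graph and both certificates depend only on `c`. The primal pair `(ρ, T)` is
feasible because `1 ⊗ ρ + T = c⁻¹ |w⟩⟨w| + D` with `w = c|00⟩ + |11⟩` and `D` diagonal, and its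
value is `(1 + c)² / c = 2 + c + 1/c`. For the matching upper bound, the dual `Y ∈ S ⊗ M₃`
satisfies `Y - |Φ⟩⟨Φ| = c⁻¹ |v⟩⟨v| + D'` with `v = |00⟩ - c|11⟩ + |22⟩` and `D'` diagonal, and
`tr_A Y = (1 + c)² / c · 1`. Hence for every feasible `Z = 1 ⊗ ρ + T`,
`⟨Φ|Z|Φ⟩ ≤ tr (Z Y) = tr (ρ tr_A Y) + tr (T Y) = (1 + c)² / c`, where `tr (T Y)` vanishes
because the first Kronecker factors of `T` are Hilbert–Schmidt orthogonal to `S`.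
The diagonals `D` and `D'` are nonnegative exactly when `c ≥ 1/2`, i.e. `α ≤ π/4`. -/

section HilbertSchmidt

variable {n m : Type*}

def kroneckerSpan (S : Submodule ℂ (Matrix n n ℂ)) (m : Type*) :
    Submodule ℂ (Matrix (n × m) (n × m) ℂ) :=
  Submodule.span ℂ {X | ∃ F M, F ∈ S ∧ X = F ⊗ₖ M}

theorem kronecker_mem_kroneckerSpan {S : Submodule ℂ (Matrix n n ℂ)} {F : Matrix n n ℂ}
    (hF : F ∈ S) (M : Matrix m m ℂ) : F ⊗ₖ M ∈ kroneckerSpan S m :=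
  Submodule.subset_span ⟨F, M, hF, rfl⟩

variable [Fintype n]

def traceOrthogonal (S : Submodule ℂ (Matrix n n ℂ)) : Submodule ℂ (Matrix n n ℂ) where
  carrier := {F | ∀ G ∈ S, (Gᴴ * F).trace = 0}
  add_mem' hF hF' G hG := by simp [Matrix.mul_add, hF G hG, hF' G hG]
  zero_mem' _ _ := by simp
  smul_mem' a F hF G hG := by simp [hF G hG]

theorem mem_traceOrthogonal_span {s : Set (Matrix n n ℂ)} {F : Matrix n n ℂ} :
    F ∈ traceOrthogonal (Submodule.span ℂ s) ↔ ∀ G ∈ s, (Gᴴ * F).trace = 0 := by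
  refine ⟨fun h G hG => h G (Submodule.subset_span hG), fun h G hG => ?_⟩
  induction hG using Submodule.span_induction with
  | mem G hG => exact h G hG
  | zero => simp
  | add G G' _ _ hG hG' => simp [Matrix.add_mul, hG, hG']
  | smul a G _ hG => simp [hG]

theorem trace_conjTranspose_mul_eq_zero [Fintype m] {S : Submodule ℂ (Matrix n n ℂ)}
    {Y T : Matrix (n × m) (n × m) ℂ} (hY : Y ∈ kroneckerSpan S m)
    (hT : T ∈ kroneckerSpan (traceOrthogonal S) m) : (Yᴴ * T).trace = 0 := by
  induction hT using Submodule.span_induction with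
  | mem T hT =>
    obtain ⟨F, M, hF, rfl⟩ := hT
    induction hY using Submodule.span_induction with
    | mem Y hY =>
      obtain ⟨G, N, hG, rfl⟩ := hY
      rw [conjTranspose_kronecker, ← mul_kronecker_mul, trace_kronecker, hF G hG, zero_mul]
    | zero => simp
    | add Y Y' _ _ hY hY' => simp [Matrix.add_mul, hY, hY']
    | smul a Y _ hY => simp [hY]
  | zero => simp
  | add T T' _ _ hT hT' => simp [Matrix.mul_add, hT, hT']
  | smul a T _ hT => simp [hT]

theorem Matrix.PosSemidef.trace_mul_nonneg [DecidableEq n] {A B : Matrix n n ℂ}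
    (hA : A.PosSemidef) (hB : B.PosSemidef) : 0 ≤ (A * B).trace := by
  obtain ⟨C, rfl⟩ : ∃ C : Matrix n n ℂ, B = Cᴴ * C := by
    open scoped MatrixOrder in exact CStarAlgebra.nonneg_iff_eq_star_mul_self.mp hB.nonneg
  rw [← Matrix.mul_assoc, trace_mul_comm, ← Matrix.mul_assoc]
  exact (hA.mul_mul_conjTranspose_same C).trace_nonneg

theorem dotProduct_mulVec_eq_trace_mul_vecMulVec (M : Matrix n n ℂ) (y : n → ℂ) :
    star y ⬝ᵥ M *ᵥ y = (M * vecMulVec y (star y)).trace := by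
  simp only [dotProduct, mulVec, trace, diag, mul_apply, vecMulVec_apply, Pi.star_apply,
    Finset.mul_sum]
  exact Finset.sum_congr rfl fun i _ => Finset.sum_congr rfl fun j _ => by ring

theorem posSemidef_smul_vecMulVec_add_diagonal [DecidableEq n] {r : ℝ} (hr : 0 ≤ r)
    (v : n → ℂ) {d : n → ℝ} (hd : 0 ≤ d) :
    (r • vecMulVec v (star v) + diagonal fun i => (d i : ℂ)).PosSemidef :=
  ((posSemidef_vecMulVec_self_star v).smul hr).add
    (PosSemidef.diagonal fun i => Complex.zero_le_real.mpr (hd i))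

end HilbertSchmidt

theorem trace_one_kronecker_mul (ρ : M3) (Y : M9) :
    (((1 : M3) ⊗ₖ ρ) * Y).trace = (ρ * trA Y).trace := by
  simp [trace, mul_apply, trA, one_apply, Fintype.sum_prod_type, Finset.mul_sum]
  exact Finset.sum_comm.trans (Finset.sum_congr rfl fun _ _ => Finset.sum_comm)

def lovaszValues (S : Submodule ℂ M3) : Set ℝ :=
  {x | ∃ (ρ : M3) (T : M9), ρ.PosSemidef ∧ ρ.trace = 1 ∧
    T ∈ kroneckerSpan (traceOrthogonal S) (Fin 3) ∧ ((1 : M3) ⊗ₖ ρ + T).PosSemidef ∧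
    x = (star Phi ⬝ᵥ (((1 : M3) ⊗ₖ ρ + T) *ᵥ Phi)).re}

theorem mem_upperBounds_lovaszValues {S : Submodule ℂ M3} {Y : M9} {r : ℝ}
    (hY : Y ∈ kroneckerSpan S (Fin 3)) (hYΦ : (Y - vecMulVec Phi (star Phi)).PosSemidef)
    (htrA : trA Y = (r : ℂ) • 1) : r ∈ upperBounds (lovaszValues S) := by
  rintro x ⟨ρ, T, -, hρ, hT, hZ, rfl⟩
  set Z := (1 : M3) ⊗ₖ ρ + T
  have hYherm : Y.IsHermitian := by
    simpa using hYΦ.isHermitian.add (posSemidef_vecMulVec_self_star Phi).isHermitian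
  set P := vecMulVec Phi (star Phi)
  have hZY : (Z * Y).trace = r := by
    calc (Z * Y).trace = (ρ * trA Y).trace + (Yᴴ * T).trace := by
          rw [Matrix.add_mul, trace_add, trace_one_kronecker_mul, trace_mul_comm T, hYherm.eq]
      _ = r := by
          rw [trace_conjTranspose_mul_eq_zero hY hT, htrA, Matrix.mul_smul, Matrix.mul_one,
            trace_smul, hρ]
          simp
  have hslack : 0 ≤ (Z * (Y - P)).trace.re := (Complex.le_def.mp (hZ.trace_mul_nonneg hYΦ)).1
  calc (star Phi ⬝ᵥ Z *ᵥ Phi).re = (Z * Y).trace.re - (Z * (Y - P)).trace.re := by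
        rw [dotProduct_mulVec_eq_trace_mul_vecMulVec, Matrix.mul_sub, trace_sub, Complex.sub_re,
          sub_sub_cancel]
    _ ≤ r := by rw [hZY, Complex.ofReal_re]; linarith

def nonCommGraph (c : ℝ) : Submodule ℂ M3 :=
  Submodule.span ℂ {ket 0 0 + c • ket 1 1, (1 - c) • ket 1 1 + ket 2 2, ket 0 2, ket 2 0}

theorem Sgraph_eq_nonCommGraph (α : ℝ) : Sgraph α = nonCommGraph (Real.cos α ^ 2) := by
  have hsin : (Real.sin α : ℂ) ^ 2 = ((1 - Real.cos α ^ 2 : ℝ) : ℂ) := by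
    rw [← Real.sin_sq]; push_cast; rfl
  simp only [Sgraph, nonCommGraph, F1, F2, F3, F4, hsin, ← Complex.coe_smul]
  push_cast
  rfl

theorem posSemidef_ket_self (i : Fin 3) : (ket i i).PosSemidef := by
  rw [ket, ← diagonal_single]
  exact PosSemidef.diagonal (Pi.single_nonneg.mpr zero_le_one)

def primalRho (c : ℝ) : M3 := (1 + c)⁻¹ • (c • ket 0 0 + ket 1 1)

def primalT₁ (c : ℝ) : M3 := (1 + c)⁻¹ • (ket 0 0 - c⁻¹ • ket 1 1 + ((1 - c) / c) • ket 2 2)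

def primalT₂ (c : ℝ) : M3 := c ^ 2 • ket 0 0 - ket 1 1

def primalT (c : ℝ) : M9 :=
  primalT₁ c ⊗ₖ primalT₂ c + ket 0 1 ⊗ₖ ket 0 1 + ket 1 0 ⊗ₖ ket 1 0

def primalVec (c : ℝ) : Fin 3 × Fin 3 → ℂ := fun p =>
  if p = (0, 0) then c else if p = (1, 1) then 1 else 0

def primalSlack (c : ℝ) : Fin 3 × Fin 3 → ℝ := fun p =>
  if p = (2, 0) then c * (2 - c) / (1 + c)
  else if p = (2, 1) then (2 * c - 1) / (c * (1 + c)) else 0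

theorem one_kronecker_primalRho_add_primalT {c : ℝ} (hc : 0 < c) :
    (1 : M3) ⊗ₖ primalRho c + primalT c =
      c⁻¹ • vecMulVec (primalVec c) (star (primalVec c)) +
        diagonal fun p => (primalSlack c p : ℂ) := by
  have : (c : ℂ) ≠ 0 := by exact_mod_cast hc.ne'
  have : (1 + c : ℂ) ≠ 0 := by exact_mod_cast (by positivity : 1 + c ≠ 0)
  ext ⟨a, b⟩ ⟨a', b'⟩
  fin_cases a <;> fin_cases b <;> fin_cases a' <;> fin_cases b' <;>
    simp [primalRho, primalT, primalT₁, primalT₂, primalVec, primalSlack, ket,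
      one_apply, vecMulVec_apply] <;> field_simp <;> ring

theorem primal_objective {c : ℝ} (hc : 0 < c) :
    (star Phi ⬝ᵥ (((1 : M3) ⊗ₖ primalRho c + primalT c) *ᵥ Phi)).re = (1 + c) ^ 2 / c := by
  rw [one_kronecker_primalRho_add_primalT hc]
  simp [dotProduct, mulVec, Fintype.sum_prod_type, Fin.sum_univ_three, Phi, primalVec,
    primalSlack, vecMulVec_apply, diagonal_apply]
  field_simp
  ring

theorem primalSlack_nonneg {c : ℝ} (hc₁ : 1 / 2 ≤ c) (hc₂ : c ≤ 2) : 0 ≤ primalSlack c := by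
  intro p
  simp only [primalSlack, Pi.zero_apply]
  split_ifs
  · exact div_nonneg (mul_nonneg (by linarith) (by linarith)) (by linarith)
  · exact div_nonneg (by linarith) (by positivity)
  · rfl

theorem posSemidef_primalRho {c : ℝ} (hc : 0 ≤ c) : (primalRho c).PosSemidef :=
  (((posSemidef_ket_self 0).smul hc).add (posSemidef_ket_self 1)).smul (by positivity)

theorem trace_primalRho {c : ℝ} (hc : 0 < c) : (primalRho c).trace = 1 := by
  have : (1 + c : ℂ) ≠ 0 := by exact_mod_cast (by positivity : 1 + c ≠ 0)
  simp [primalRho, ket]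
  field_simp
  ring

theorem primalT₁_mem_traceOrthogonal {c : ℝ} (hc : c ≠ 0) :
    primalT₁ c ∈ traceOrthogonal (nonCommGraph c) := by
  have : (c : ℂ) ≠ 0 := by exact_mod_cast hc
  simp [nonCommGraph, mem_traceOrthogonal_span, primalT₁, ket, trace_fin_three, mul_apply,
    Fin.sum_univ_three]
  constructor <;> field_simp <;> ring

theorem ket01_ket10_mem_traceOrthogonal (c : ℝ) :
    ket 0 1 ∈ traceOrthogonal (nonCommGraph c) ∧ ket 1 0 ∈ traceOrthogonal (nonCommGraph c) := by
  simp [nonCommGraph, mem_traceOrthogonal_span, ket, trace_fin_three, mul_apply,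
    Fin.sum_univ_three]

theorem primalT_mem_kroneckerSpan {c : ℝ} (hc : c ≠ 0) :
    primalT c ∈ kroneckerSpan (traceOrthogonal (nonCommGraph c)) (Fin 3) :=
  add_mem (add_mem (kronecker_mem_kroneckerSpan (primalT₁_mem_traceOrthogonal hc) _)
    (kronecker_mem_kroneckerSpan (ket01_ket10_mem_traceOrthogonal c).1 _))
    (kronecker_mem_kroneckerSpan (ket01_ket10_mem_traceOrthogonal c).2 _)

def dualY₁ (c : ℝ) : M3 := ((1 + c) / c) • ket 0 0 + (1 + c) • ket 1 1

def dualY₂ (c : ℝ) : M3 :=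
  (2 - c⁻¹) • ket 0 0 + (c⁻¹ - (1 - c)) • ket 1 1 + ((1 + c) / c) • ket 2 2

def dualY (c : ℝ) : M9 :=
  dualY₁ c ⊗ₖ (ket 0 0 + ket 1 1) + dualY₂ c ⊗ₖ ket 2 2 +
    ((1 + c) / c) • (ket 0 2 ⊗ₖ ket 0 2 + ket 2 0 ⊗ₖ ket 2 0)

def dualVec (c : ℝ) : Fin 3 × Fin 3 → ℂ := fun p =>
  if p = (0, 0) then 1 else if p = (1, 1) then -c else if p = (2, 2) then 1 else 0

def dualSlack (c : ℝ) : Fin 3 × Fin 3 → ℝ := fun p =>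
  if p = (0, 1) then (1 + c) / c else if p = (1, 0) then 1 + c
  else if p = (0, 2) then 2 - c⁻¹ else if p = (1, 2) then c⁻¹ - (1 - c) else 0

theorem dualY_sub_eq {c : ℝ} (hc : c ≠ 0) :
    dualY c - vecMulVec Phi (star Phi) =
      c⁻¹ • vecMulVec (dualVec c) (star (dualVec c)) +
        diagonal fun p => (dualSlack c p : ℂ) := by
  have : (c : ℂ) ≠ 0 := by exact_mod_cast hc
  ext ⟨a, b⟩ ⟨a', b'⟩
  fin_cases a <;> fin_cases b <;> fin_cases a' <;> fin_cases b' <;>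
    simp [dualY, dualY₁, dualY₂, dualVec, dualSlack, Phi, ket, vecMulVec_apply] <;>
    field_simp <;> ring

theorem dualSlack_nonneg {c : ℝ} (hc : 1 / 2 ≤ c) : 0 ≤ dualSlack c := by
  have hc₀ : 0 < c := by linarith
  intro p
  simp only [dualSlack, Pi.zero_apply]
  split_ifs
  · positivity
  · positivity
  · rw [sub_nonneg, inv_le_comm₀ hc₀ two_pos]; linarith
  · rw [show c⁻¹ - (1 - c) = ((c - 1) ^ 2 + c) / c by field_simp; ring]
    positivity
  · rfl

theorem trA_dualY {c : ℝ} (hc : c ≠ 0) : trA (dualY c) = (((1 + c) ^ 2 / c : ℝ) : ℂ) • 1 := by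
  have : (c : ℂ) ≠ 0 := by exact_mod_cast hc
  ext i j
  fin_cases i <;> fin_cases j <;>
    simp [trA, dualY, dualY₁, dualY₂, ket, Fin.sum_univ_three, one_apply]
  all_goals field_simp
  ring

theorem dualY₁_eq {c : ℝ} (hc : c ≠ 0) :
    dualY₁ c = ((1 + c) / c) • (ket 0 0 + c • ket 1 1) := by
  rw [dualY₁, smul_add, smul_smul, div_mul_cancel₀ _ hc]

theorem dualY₂_eq {c : ℝ} (hc : c ≠ 0) :
    dualY₂ c = ((2 * c - 1) / c) • (ket 0 0 + c • ket 1 1) +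
      ((1 + c) / c) • ((1 - c) • ket 1 1 + ket 2 2) := by
  rw [dualY₂]
  match_scalars <;> field_simp
  ring

theorem dualY_mem_kroneckerSpan {c : ℝ} (hc : c ≠ 0) :
    dualY c ∈ kroneckerSpan (nonCommGraph c) (Fin 3) := by
  have gen : ∀ G ∈ ({ket 0 0 + c • ket 1 1, (1 - c) • ket 1 1 + ket 2 2, ket 0 2, ket 2 0} :
      Set M3), ∀ N : M3, G ⊗ₖ N ∈ kroneckerSpan (nonCommGraph c) (Fin 3) :=
    fun G hG => kronecker_mem_kroneckerSpan (Submodule.subset_span hG)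
  rw [dualY, dualY₁_eq hc, dualY₂_eq hc, add_kronecker, smul_kronecker, smul_kronecker,
    smul_kronecker]
  apply_rules [add_mem, Submodule.smul_of_tower_mem, gen] <;> simp

theorem isGreatest_lovaszValues_nonCommGraph {c : ℝ} (hc₁ : 1 / 2 ≤ c) (hc₂ : c ≤ 2) :
    IsGreatest (lovaszValues (nonCommGraph c)) ((1 + c) ^ 2 / c) := by
  have hc₀ : 0 < c := by linarith
  refine ⟨⟨primalRho c, primalT c, posSemidef_primalRho hc₀.le, trace_primalRho hc₀,
    primalT_mem_kroneckerSpan hc₀.ne', ?_, ?_⟩,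
    mem_upperBounds_lovaszValues (dualY_mem_kroneckerSpan hc₀.ne') ?_ (trA_dualY hc₀.ne')⟩
  · rw [one_kronecker_primalRho_add_primalT hc₀]
    exact posSemidef_smul_vecMulVec_add_diagonal (by positivity) _ (primalSlack_nonneg hc₁ hc₂)
  · exact (primal_objective hc₀).symm
  · rw [dualY_sub_eq hc₀.ne']
    exact posSemidef_smul_vecMulVec_add_diagonal (by positivity) _ (dualSlack_nonneg hc₁)

/-- ϑ̃(N_α) = 2 + cos²α + sec²α > 4: the quantum Lovász number SDP of N_α attains
its maximum at 2 + cos²α + sec²α, which is strictly greater than 4. -/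
theorem quantum_lovasz_number (α : ℝ) (hα : 0 < α) (hα' : α ≤ Real.pi / 4) :
    IsGreatest {x : ℝ | ∃ (ρ : M3) (T : M9), ρ.PosSemidef ∧ ρ.trace = 1 ∧
        T ∈ Submodule.span ℂ
          {X : M9 | ∃ F M, (∀ G ∈ Sgraph α, (Gᴴ * F).trace = 0) ∧ X = F ⊗ₖ M} ∧
        ((1 : M3) ⊗ₖ ρ + T).PosSemidef ∧
        x = (star Phi ⬝ᵥ (((1 : M3) ⊗ₖ ρ + T) *ᵥ Phi)).re}
      (2 + Real.cos α ^ 2 + 1 / Real.cos α ^ 2) ∧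
    2 + Real.cos α ^ 2 + 1 / Real.cos α ^ 2 > 4 := by
  have hcos₀ : 0 ≤ Real.cos (2 * α) :=
    Real.cos_nonneg_of_mem_Icc ⟨by linarith [Real.pi_pos], by linarith⟩
  have hcos₁ : Real.cos (2 * α) < 1 := by
    simpa using Real.cos_lt_cos_of_nonneg_of_le_pi le_rfl (by linarith [Real.pi_pos])
      (by linarith : 0 < 2 * α)
  have hc : Real.cos α ^ 2 = 1 / 2 + Real.cos (2 * α) / 2 := Real.cos_sq α
  set c := Real.cos α ^ 2
  have hc₀ : 0 < c := by linarith
  have hval : 2 + c + 1 / c = (1 + c) ^ 2 / c := by field_simp; ring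
  rw [hval]
  refine ⟨?_, ?_⟩
  · rw [Sgraph_eq_nonCommGraph]
    exact isGreatest_lovaszValues_nonCommGraph (by linarith) (by linarith)
  · rw [gt_iff_lt, lt_div_iff₀ hc₀]
    nlinarith
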